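/- arXiv:1805.12466 — 3 statements merged into one kernel-verified Lean document; each statement's English description precedes it below -/
import Mathlib

section
/- The shuffle map is graded symmetric: for a ∈ N(A)_p and b ∈ N(B)_q, sh_{A,B}(a ⊗ b) = (-1)^{pq} · τ_* (sh_{B,A}(b ⊗ a)), where τ: B⊗̂A → A⊗̂B is the degreewise twist of simplicial modules. -/
open scoped TensorProduct Classical

/-- A simplicial `K`-module, given by `K`-modules `X n` together with face maps
`d n i : X (n+1) → X n` and degeneracy maps `s n i : X n → X (n+1)` (indices are natural
numbers; only indices in the simplicial range are constrained) satisfying the simplicial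
identities. -/
structure SimplicialModule (K : Type*) [CommRing K] where
  X : ℕ → Type*
  [acg : ∀ n, AddCommGroup (X n)]
  [mod : ∀ n, Module K (X n)]
  d : ∀ n, ℕ → (X (n + 1) →ₗ[K] X n)
  s : ∀ n, ℕ → (X n →ₗ[K] X (n + 1))
  d_d : ∀ n i j, i < j → j ≤ n + 2 →
    (d n i).comp (d (n + 1) j) = (d n (j - 1)).comp (d (n + 1) i)
  d_s_lt : ∀ n i j, i < j → j ≤ n + 1 →
    (d (n + 1) i).comp (s (n + 1) j) = (s n (j - 1)).comp (d n i)
  d_s_self : ∀ n j, j ≤ n →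
    (d n j).comp (s n j) = LinearMap.id ∧ (d n (j + 1)).comp (s n j) = LinearMap.id
  d_s_gt : ∀ n i j, j + 1 < i → i ≤ n + 2 →
    (d (n + 1) i).comp (s (n + 1) j) = (s n j).comp (d n (i - 1))
  s_s : ∀ n i j, i ≤ j → j ≤ n →
    (s (n + 1) i).comp (s n j) = (s (n + 1) (j + 1)).comp (s n i)

attribute [instance] SimplicialModule.acg SimplicialModule.mod

variable {K : Type*} [CommRing K]

/-- Transport along an equality of degrees. -/
def castE (S : SimplicialModule K) {a b : ℕ} (h : a = b) : S.X a → S.X b := fun x => h ▸ x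

/-- `sIter S f m n : X n → X (n+m)` applies degeneracies `s_{f 0}, s_{f 1}, …, s_{f (m-1)}`
in this order (so `s_{f 0}` is applied first, at degree `n`). -/
def sIter (S : SimplicialModule K) (f : ℕ → ℕ) : ∀ (m n : ℕ), S.X n → S.X (n + m)
  | 0, _, x => x
  | m + 1, n, x => S.s (n + m) (f m) (sIter S f m n x)

/-- `σ` is a `(p,q)`-shuffle (0-indexed). -/
def IsShuffle (p q : ℕ) (σ : Equiv.Perm (Fin (p + q))) : Prop :=
  (∀ i j : Fin (p + q), (i : ℕ) < j → (j : ℕ) < p → σ i < σ j) ∧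
  (∀ i j : Fin (p + q), (i : ℕ) < j → p ≤ (i : ℕ) → σ i < σ j)

/-- A permutation of `Fin m` as a function `ℕ → ℕ` (junk value `0` out of range). -/
def permFun {m : ℕ} (σ : Equiv.Perm (Fin m)) : ℕ → ℕ :=
  fun t => if h : t < m then (σ ⟨t, h⟩ : ℕ) else 0

private lemma sIter_congr (S : SimplicialModule K) (f g : ℕ → ℕ)
    (m n : ℕ) (hfg : ∀ t, t < m → f t = g t) (x : S.X n) :
    sIter S f m n x = sIter S g m n x := by
  induction m with
  | zero => rfl
  | succ m ih =>
    show S.s (n + m) (f m) (sIter S f m n x) = S.s (n + m) (g m) (sIter S g m n x)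
    rw [hfg m (Nat.lt_succ_self m), ih (fun t ht => hfg t (Nat.lt_succ_of_lt ht))]

private lemma val_finRotate_pow {m : ℕ} (hm : 0 < m) (k : ℕ) (x : Fin m) :
    ((((finRotate m) ^ k) x : Fin m) : ℕ) = ((x : ℕ) + k) % m := by
  obtain ⟨n, rfl⟩ := Nat.exists_eq_succ_of_ne_zero hm.ne'
  induction k generalizing x with
  | zero => simp [Nat.mod_eq_of_lt x.isLt]
  | succ k ih =>
    rw [pow_succ, Equiv.Perm.mul_apply, ih, finRotate_succ_apply, Fin.add_def, Fin.val_one']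
    rw [Nat.mod_add_mod, show (x : ℕ) + 1 % (n + 1) + k = (x : ℕ) + k + 1 % (n + 1) by omega,
      Nat.add_mod_mod]
    rfl

private lemma sign_finRotate' {m : ℕ} (hm : 0 < m) :
    Equiv.Perm.sign (finRotate m) = (-1) ^ (m - 1) := by
  obtain ⟨n, rfl⟩ := Nat.exists_eq_succ_of_ne_zero hm.ne'
  simp [sign_finRotate]

private lemma finAddFlip_val_lt {m n : ℕ} (x : Fin (m + n)) (h : (x : ℕ) < m) :
    ((finAddFlip x : Fin (n + m)) : ℕ) = n + (x : ℕ) := by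
  obtain ⟨xv, hx⟩ := x
  rw [finAddFlip_apply_mk_left h]

private lemma finAddFlip_val_ge {m n : ℕ} (x : Fin (m + n)) (h : m ≤ (x : ℕ)) :
    ((finAddFlip x : Fin (n + m)) : ℕ) = (x : ℕ) - m := by
  obtain ⟨xv, hx⟩ := x
  rw [finAddFlip_apply_mk_right h hx]

private lemma sign_flip_aux (p q : ℕ) :
    Equiv.Perm.sign
      ((finAddFlip.trans (finCongr (Nat.add_comm p q)) : Equiv.Perm (Fin (q + p)))) =
      (-1) ^ (p * q) := by
  rcases Nat.eq_zero_or_pos (q + p) with hz | hpos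
  · have hp : p = 0 := by omega
    have hq : q = 0 := by omega
    subst hp; subst hq
    have : (finAddFlip.trans (finCongr (Nat.add_comm 0 0)) : Equiv.Perm (Fin (0 + 0))) = 1 :=
      Equiv.ext fun x => x.elim0
    rw [this]; simp
  · have hd : (finAddFlip.trans (finCongr (Nat.add_comm p q)) : Equiv.Perm (Fin (q + p)))
        = (finRotate (q + p)) ^ p := by
      apply Equiv.ext
      intro x
      apply Fin.ext
      rw [val_finRotate_pow hpos]
      simp only [Equiv.trans_apply, finCongr_apply, Fin.coe_cast]
      rcases Nat.lt_or_ge (x : ℕ) q with hx | hx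
      · rw [finAddFlip_val_lt x hx, Nat.mod_eq_of_lt (by omega)]
        omega
      · rw [finAddFlip_val_ge x hx]
        have hxlt := x.isLt
        rw [show (x : ℕ) + p = ((x : ℕ) - q) + (q + p) by omega, Nat.add_mod_right,
          Nat.mod_eq_of_lt (by omega)]
    rw [hd, map_pow, sign_finRotate' hpos, ← pow_mul]
    have heq : (q + p - 1) * p = q * p + (p - 1) * p := by
      rcases p with _ | p
      · simp
      · have h1 : q + (p + 1) - 1 = q + p := by omega
        have h2 : p + 1 - 1 = p := by omega
        rw [h1, h2]; ring
    rw [heq, pow_add]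
    have hev : Even ((p - 1) * p) := by
      rcases p with _ | p
      · simp
      · simpa using (Nat.even_mul_succ_self p)
    rw [Even.neg_one_pow hev, mul_one, mul_comm q p]
private lemma shuffle_equiv (p q : ℕ) (σ : Equiv.Perm (Fin (p + q)))
    (ρ : Equiv.Perm (Fin (q + p)))
    (hval : ∀ x : Fin (q + p), ((ρ x : Fin (q + p)) : ℕ) = ((σ (finAddFlip x)) : ℕ)) :
    IsShuffle p q σ ↔ IsShuffle q p ρ := by
  constructor
  · rintro ⟨h1, h2⟩
    constructor
    · intro i j hij hj
      rw [Fin.lt_def, hval i, hval j]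
      have hi : (i : ℕ) < q := lt_trans hij hj
      rw [← Fin.lt_def]
      apply h2
      · rw [finAddFlip_val_lt i hi, finAddFlip_val_lt j hj]; omega
      · rw [finAddFlip_val_lt i hi]; omega
    · intro i j hij hi
      rw [Fin.lt_def, hval i, hval j]
      have hj : q ≤ (j : ℕ) := le_trans hi (le_of_lt hij)
      rw [← Fin.lt_def]
      apply h1
      · rw [finAddFlip_val_ge i hi, finAddFlip_val_ge j hj]; omega
      · rw [finAddFlip_val_ge j hj]; have := j.isLt; omega
  · rintro ⟨k1, k2⟩
    constructor
    · intro i j hij hj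
      have hi : (i : ℕ) < p := lt_trans hij hj
      set i' : Fin (q + p) := ⟨q + (i : ℕ), by omega⟩ with hi'
      set j' : Fin (q + p) := ⟨q + (j : ℕ), by omega⟩ with hj'
      have hfi : finAddFlip i' = i := by
        apply Fin.ext
        rw [finAddFlip_val_ge i' (by simp [hi'])]
        simp [hi']
      have hfj : finAddFlip j' = j := by
        apply Fin.ext
        rw [finAddFlip_val_ge j' (by simp [hj'])]
        simp [hj']
      have := k2 i' j' (by simp [hi', hj']; omega) (by simp [hi'])
      rw [Fin.lt_def, hval i', hval j', hfi, hfj, ← Fin.lt_def] at this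
      exact this
    · intro i j hij hi
      have hj : p ≤ (j : ℕ) := le_trans hi (le_of_lt hij)
      have hjlt := j.isLt
      have hilt := i.isLt
      set i' : Fin (q + p) := ⟨(i : ℕ) - p, by omega⟩ with hi'
      set j' : Fin (q + p) := ⟨(j : ℕ) - p, by omega⟩ with hj'
      have hfi : finAddFlip i' = i := by
        apply Fin.ext
        rw [finAddFlip_val_lt i' (by simp [hi']; omega)]
        simp [hi']; omega
      have hfj : finAddFlip j' = j := by
        apply Fin.ext
        rw [finAddFlip_val_lt j' (by simp [hj']; omega)]
        simp [hj']; omega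
      have := k1 i' j' (by simp [hi', hj']; omega) (by simp [hj']; omega)
      rw [Fin.lt_def, hval i', hval j', hfi, hfj, ← Fin.lt_def] at this
      exact this

/-- The shuffle map is graded symmetric, stated elementwise: for `a ∈ N(A)_p`,
`b ∈ N(B)_q`, `sh_{A,B}(a ⊗ b) = (-1)^{pq} τ_*(sh_{B,A}(b ⊗ a))` in
`(A ⊗̂ B)_{p+q} = A_{p+q} ⊗ B_{p+q}`, where `τ` is the twist `B ⊗̂ A → A ⊗̂ B` and
`sh_{A,B}(a ⊗ b) = Σ_{(p,q)-shuffles σ} sgn(σ) (s_{σ(p+q-1)} ⋯ s_{σ(p)} a) ⊗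
(s_{σ(p-1)} ⋯ s_{σ(0)} b)`. -/
theorem shuffle_graded_symmetric (A B : SimplicialModule K) (p q : ℕ)
    (a : A.X p) (b : B.X q) :
    (∑ σ : Equiv.Perm (Fin (p + q)),
      if IsShuffle p q σ then
        ((Equiv.Perm.sign σ : ℤˣ) : ℤ) •
          ((sIter A (fun t => permFun σ (p + t)) q p a) ⊗ₜ[K]
            (castE B (show q + p = p + q by omega) (sIter B (permFun σ) p q b)))
      else 0) =
    ((-1 : ℤ) ^ (p * q)) •
      (∑ ρ : Equiv.Perm (Fin (q + p)),
        if IsShuffle q p ρ then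
          ((Equiv.Perm.sign ρ : ℤˣ) : ℤ) •
            ((sIter A (permFun ρ) q p a) ⊗ₜ[K]
              (castE B (show q + p = p + q by omega)
                (sIter B (fun t => permFun ρ (q + t)) p q b)))
        else 0) := by
  classical
  have h : p + q = q + p := Nat.add_comm p q
  set d : Equiv.Perm (Fin (q + p)) := (finAddFlip.trans (finCongr (Nat.add_comm p q))) with hdd
  rw [Finset.smul_sum]
  refine Fintype.sum_equiv ((Equiv.permCongr (finCongr h)).trans (Equiv.mulRight d)) _ _ ?_
  intro σ
  set ρ : Equiv.Perm (Fin (q + p)) :=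
    ((Equiv.permCongr (finCongr h)).trans (Equiv.mulRight d)) σ with hρ
  have hval : ∀ x : Fin (q + p), ((ρ x : Fin (q + p)) : ℕ) = ((σ (finAddFlip x)) : ℕ) := by
    intro x
    simp [hρ, hdd, Equiv.permCongr_apply, Equiv.Perm.mul_apply]
  have hiff := shuffle_equiv p q σ ρ hval
  by_cases hs : IsShuffle p q σ
  · rw [if_pos hs, if_pos (hiff.mp hs)]
    have hsign : ((Equiv.Perm.sign ρ : ℤˣ) : ℤ) =
        ((Equiv.Perm.sign σ : ℤˣ) : ℤ) * (-1) ^ (p * q) := by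
      have hsu : Equiv.Perm.sign ρ = Equiv.Perm.sign σ * (-1) ^ (p * q) := by
        rw [hρ]
        show Equiv.Perm.sign ((Equiv.permCongr (finCongr h) σ) * d) = _
        rw [map_mul, Equiv.Perm.sign_permCongr, hdd, sign_flip_aux]
      rw [hsu]; push_cast; ring
    have hA : sIter A (fun t => permFun σ (p + t)) q p a = sIter A (permFun ρ) q p a := by
      refine sIter_congr A _ _ q p ?_ a
      intro t ht
      have htq : t < q + p := by omega
      have hpt : p + t < p + q := by omega
      show permFun σ (p + t) = permFun ρ t
      rw [permFun, permFun]
      rw [dif_pos htq, dif_pos hpt, hval ⟨t, htq⟩]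
      congr 2
      apply Fin.ext
      rw [finAddFlip_val_lt ⟨t, htq⟩ ht]
    have hB : sIter B (permFun σ) p q b = sIter B (fun t => permFun ρ (q + t)) p q b := by
      refine sIter_congr B _ _ p q ?_ b
      intro t ht
      have htq : q + t < q + p := by omega
      have hpt : t < p + q := by omega
      show permFun σ t = permFun ρ (q + t)
      rw [permFun, permFun]
      rw [dif_pos htq, dif_pos hpt, hval ⟨q + t, htq⟩]
      congr 2
      apply Fin.ext
      rw [finAddFlip_val_ge ⟨q + t, htq⟩ (by simp)]
      simp
    rw [hA, hB, smul_smul, hsign]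
    congr 1
    have h2 : ((-1 : ℤ)) ^ (p * q) * ((-1 : ℤ)) ^ (p * q) = 1 := by
      rw [← pow_add]
      exact Even.neg_one_pow ⟨p * q, by ring⟩
    linear_combination (-(((Equiv.Perm.sign σ : ℤˣ) : ℤ))) * h2
  · rw [if_neg hs, if_neg (fun hr => hs (hiff.mpr hr)), smul_zero]
end

section
/- The blow-up (block permutation) assignment is a group homomorphism in the following sense: for σ, σ' ∈ Σ_n and natural numbers p_1,...,p_n, the block permutation of σ'σ with block sizes (p_1,...,p_n) equals the composite of the block permutation of σ with blocks (p_1,...,p_n) followed by the block permutation of σ' with blocks (p_{σ^{-1}(1)},...,p_{σ^{-1}(n)}). -/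
/-- `β ∈ Σ_N` is the block permutation (blow-up) `σ_{(p_1,…,p_n)}` of `σ ∈ Σ_n` with
block sizes `p` : it permutes the `n` consecutive blocks of sizes `p 0, …, p (n-1)`
according to `σ`, preserving the order within each block.  Concretely, `N = Σ p i` and
the `r`-th element of block `i` (at absolute position `Σ_{j<i} p j + r`) is sent to the
`r`-th element of the block at position `σ i` of the rearranged block structure (whose
block sizes are `p ∘ σ⁻¹`). -/
private lemma nat_decomp (f : ℕ → ℕ) : ∀ n k, k < ∑ j ∈ Finset.range n, f j →
    ∃ m, m < n ∧ ∃ r, r < f m ∧ k = (∑ j ∈ Finset.range m, f j) + r := by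
  intro n
  induction n with
  | zero => simp
  | succ n ih =>
    intro k hk
    rw [Finset.sum_range_succ] at hk
    by_cases h : k < ∑ j ∈ Finset.range n, f j
    · obtain ⟨m, hm, r, hr, hk⟩ := ih k h
      exact ⟨m, by omega, r, hr, hk⟩
    · exact ⟨n, by omega, k - ∑ j ∈ Finset.range n, f j, by omega, by omega⟩

private lemma sum_Iio_eq {n : ℕ} (p : Fin n → ℕ) (i : Fin n) :
    ∑ j ∈ Finset.Iio i, p j =
      ∑ j ∈ Finset.range i.val, (fun j => if h : j < n then p ⟨j, h⟩ else 0) j := by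
  rw [← Nat.Iio_eq_range, ← Fin.map_valEmbedding_Iio, Finset.sum_map]
  exact Finset.sum_congr rfl fun j _ => by simp [j.isLt]

private lemma fin_decomp {n N : ℕ} (p : Fin n → ℕ) (hN : N = ∑ i, p i) (k : Fin N) :
    ∃ (i : Fin n) (r : ℕ), r < p i ∧ (k : ℕ) = (∑ j ∈ Finset.Iio i, p j) + r := by
  set f : ℕ → ℕ := fun j => if h : j < n then p ⟨j, h⟩ else 0 with hf
  have hsum : ∑ i, p i = ∑ j ∈ Finset.range n, f j := by
    rw [Finset.sum_range]
    simp [hf]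
  have hk : (k : ℕ) < ∑ j ∈ Finset.range n, f j := by
    rw [← hsum, ← hN]; exact k.isLt
  obtain ⟨m, hm, r, hr, hkr⟩ := nat_decomp f n k hk
  refine ⟨⟨m, hm⟩, r, ?_, ?_⟩
  · simpa [hf, hm] using hr
  · rw [sum_Iio_eq]; exact hkr

def IsBlockPerm {n N : ℕ} (σ : Equiv.Perm (Fin n)) (p : Fin n → ℕ)
    (β : Equiv.Perm (Fin N)) : Prop :=
  N = ∑ i, p i ∧
  ∀ (i : Fin n) (r : ℕ), r < p i →
    ∀ ht : (∑ j ∈ Finset.Iio i, p j) + r < N,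
      (β ⟨(∑ j ∈ Finset.Iio i, p j) + r, ht⟩ : ℕ) =
        (∑ j' ∈ Finset.Iio (σ i), p (σ.symm j')) + r

/-- The blow-up (block permutation) assignment is multiplicative: the block permutation
of `σ'σ` with block sizes `(p_1,…,p_n)` is the composite of the block permutation of `σ`
with blocks `(p_1,…,p_n)` followed by the block permutation of `σ'` with blocks
`(p_{σ⁻¹(1)},…,p_{σ⁻¹(n)})`. -/
theorem blockPerm_mul {n N : ℕ} (σ σ' : Equiv.Perm (Fin n)) (p : Fin n → ℕ)
    (β β' γ : Equiv.Perm (Fin N))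
    (hβ : IsBlockPerm σ p β)
    (hβ' : IsBlockPerm σ' (fun j => p (σ.symm j)) β')
    (hγ : IsBlockPerm (σ' * σ) p γ) :
    γ = β' * β := by
  apply Equiv.ext
  intro x
  obtain ⟨i, r, hr, hx⟩ := fin_decomp p hγ.1 x
  have hxlt : (∑ j ∈ Finset.Iio i, p j) + r < N := hx ▸ x.isLt
  have hxe : x = ⟨(∑ j ∈ Finset.Iio i, p j) + r, hxlt⟩ := Fin.ext hx
  have h1 : (β x : ℕ) = (∑ j' ∈ Finset.Iio (σ i), p (σ.symm j')) + r := by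
    rw [hxe]; exact hβ.2 i r hr hxlt
  have h2 : (γ x : ℕ) = (∑ j' ∈ Finset.Iio ((σ' * σ) i), p ((σ' * σ).symm j')) + r := by
    rw [hxe]; exact hγ.2 i r hr hxlt
  have hlt2 : (∑ j' ∈ Finset.Iio (σ i), (fun j => p (σ.symm j)) j') + r < N :=
    h1 ▸ (β x).isLt
  have hβxe : β x = ⟨(∑ j' ∈ Finset.Iio (σ i), (fun j => p (σ.symm j)) j') + r, hlt2⟩ :=
    Fin.ext h1
  have hqr : r < (fun j => p (σ.symm j)) (σ i) := by simpa using hr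
  have h3 : (β' (β x) : ℕ) =
      (∑ j' ∈ Finset.Iio (σ' (σ i)), p (σ.symm (σ'.symm j'))) + r := by
    rw [hβxe]; exact hβ'.2 (σ i) r hqr hlt2
  refine Fin.ext ?_
  rw [Equiv.Perm.mul_apply, h2, h3]
  have he : ∀ j', (Equiv.symm (σ' * σ)) j' = σ.symm (σ'.symm j') := fun _ => rfl
  simp only [Equiv.Perm.mul_apply, he]
end

section
/- For σ ∈ Σ_n and block sizes p_1,...,p_n ∈ ℕ, the sign of the block permutation σ_{(p_1,...,p_n)} equals (-1) raised to Σ_{(i,j): i<j, σ(i)>σ(j)} p_i p_j, i.e. the product over inversions (i,j) of σ of (-1)^{p_i p_j}. -/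
private lemma sign_eq_signAux' {N : ℕ} (f : Equiv.Perm (Fin N)) :
    Equiv.Perm.sign f = Equiv.Perm.signAux f := by
  match N with
  | 0 => rw [Subsingleton.elim f 1]; simp [Equiv.Perm.signAux_one]
  | 1 => rw [Subsingleton.elim f 1]; simp [Equiv.Perm.signAux_one]
  | (m+2) =>
    have hs : Function.Surjective
        (MonoidHom.mk' Equiv.Perm.signAux Equiv.Perm.signAux_mul :
          Equiv.Perm (Fin (m+2)) →* ℤˣ) := by
      intro u
      rcases Int.units_eq_one_or u with h | h
      · exact ⟨1, by simp [h, Equiv.Perm.signAux_one]⟩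
      · exact ⟨Equiv.swap 0 1, by
          rw [h]; exact Equiv.Perm.signAux_swap (by exact Fin.zero_ne_one)⟩
    rw [← Equiv.Perm.eq_sign_of_surjective_hom hs]; rfl

private lemma signAux_eq_pow' {N : ℕ} (f : Equiv.Perm (Fin N)) :
    Equiv.Perm.signAux f =
      (-1 : ℤˣ) ^ (∑ x ∈ Equiv.Perm.finPairsLT N,
        if f x.1 ≤ f x.2 then 1 else 0) := by
  rw [← Finset.prod_pow_eq_pow_sum]
  refine Finset.prod_congr rfl fun x _ => ?_
  split <;> simp

private lemma sum_Iio_fin' {M : Type*} [AddCommMonoid M] {n : ℕ} (f : Fin n → M) (g : ℕ → M)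
    (hg : ∀ j : Fin n, g j.val = f j) (i : Fin n) :
    ∑ j ∈ Finset.Iio i, f j = ∑ j ∈ Finset.range i.val, g j := by
  refine Finset.sum_nbij' (fun j => (j : ℕ)) (fun j => if h : j < n then ⟨j, h⟩ else i)
    ?_ ?_ ?_ ?_ ?_
  · intro a ha
    simp only [Finset.mem_Iio] at ha
    simpa using ha
  · intro a ha
    simp only [Finset.mem_range] at ha
    have hn : a < n := ha.trans i.isLt
    simp [hn, Finset.mem_Iio, Fin.lt_def, ha]
  · intro a ha
    simp [a.isLt]
  · intro a ha
    simp only [Finset.mem_range] at ha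
    simp [ha.trans i.isLt]
  · intro a ha
    exact (hg a).symm

private lemma sum_range_sum' {M : Type*} [AddCommMonoid M] (q : ℕ → ℕ) (g : ℕ → M) :
    ∀ m : ℕ, ∑ x ∈ Finset.range (∑ j ∈ Finset.range m, q j), g x
      = ∑ i ∈ Finset.range m, ∑ r ∈ Finset.range (q i), g ((∑ j ∈ Finset.range i, q j) + r)
  | 0 => by simp
  | (m+1) => by
      rw [Finset.sum_range_succ (fun j => q j) m, Finset.sum_range_add, sum_range_sum' q g m,
        Finset.sum_range_succ]

private lemma sum_range_sum'' {M : Type*} [AddCommMonoid M] (q : ℕ → ℕ) (g : ℕ → M)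
    (m N : ℕ) (hN : N = ∑ j ∈ Finset.range m, q j) :
    ∑ x ∈ Finset.range N, g x
      = ∑ i ∈ Finset.range m, ∑ r ∈ Finset.range (q i), g ((∑ j ∈ Finset.range i, q j) + r) := by
  subst hN
  exact sum_range_sum' q g m

/-- The sign of the block permutation `σ_{(p_1,…,p_n)}` is `(-1)` raised to
`Σ_{(i,j) : i<j, σ(i)>σ(j)} p_i p_j`, i.e. the product over the inversions of `σ` of
`(-1)^{p_i p_j}`. -/
theorem blockPerm_sign {n N : ℕ} (σ : Equiv.Perm (Fin n)) (p : Fin n → ℕ)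
    (β : Equiv.Perm (Fin N)) (hβ : IsBlockPerm σ p β) :
    Equiv.Perm.sign β =
      (-1 : ℤˣ) ^ (∑ i : Fin n, ∑ j : Fin n,
        if i < j ∧ σ j < σ i then p i * p j else 0) := by
  obtain ⟨hN, hb⟩ := hβ
  classical
  set q : ℕ → ℕ := fun j => if h : j < n then p ⟨j, h⟩ else 0 with hq
  set P : ℕ → ℕ := fun i => ∑ j ∈ Finset.range i, q j with hP
  set Tv : Fin n → ℕ := fun k => ∑ j' ∈ Finset.Iio k, p (σ.symm j') with hTv
  set fv : ℕ → ℕ := fun x => if h : x < N then ((β ⟨x, h⟩ : Fin N) : ℕ) else 0 with hfv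
  set G : ℕ → ℕ → ℕ := fun x y => if x < y ∧ fv y ≤ fv x then 1 else 0 with hG
  set sN : ℕ → ℕ := fun i => if h : i < n then ((σ ⟨i, h⟩ : Fin n) : ℕ) else 0 with hsn
  set c : ℕ → ℕ → ℕ := fun i j => if i < j ∧ sN j < sN i then 1 else 0 with hc
  have hqp : ∀ i : Fin n, q i.val = p i := fun i => by
    simp only [hq]; rw [dif_pos i.isLt, Fin.eta]
  have hsNv : ∀ k : Fin n, sN k.val = ((σ k : Fin n) : ℕ) := fun k => by
    simp only [hsn]; rw [dif_pos k.isLt, Fin.eta]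
  have hcval : ∀ i j : Fin n, c i.val j.val = (if i < j ∧ σ j < σ i then 1 else 0) := by
    intro i j
    simp only [hc, hsNv i, hsNv j, Fin.lt_def]
  have hPmono : ∀ {i j : ℕ}, i ≤ j → P i ≤ P j := fun {i j} h =>
    Finset.sum_le_sum_of_subset (Finset.range_subset_range.2 h)
  have hPstep : ∀ i, P (i+1) = P i + q i := fun i => Finset.sum_range_succ q i
  have hNP : N = P n := by
    rw [hN, hP]
    rw [show (∑ i, p i) = ∑ i : Fin n, q i.val from
      Finset.sum_congr rfl fun i _ => (hqp i).symm]
    exact Fin.sum_univ_eq_sum_range q n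
  have hIio : ∀ i : Fin n, (∑ j ∈ Finset.Iio i, p j) = P i.val := fun i =>
    sum_Iio_fin' p q hqp i
  have hbound : ∀ (i : Fin n) (r : ℕ), r < p i → P i.val + r < N := by
    intro i r hr
    have h1 : P i.val + r < P (i.val + 1) := by
      rw [hPstep]
      exact Nat.add_lt_add_left (by rw [hqp]; exact hr) _
    have h2 : P (i.val + 1) ≤ P n := hPmono i.isLt
    omega
  have hfv_eval : ∀ (i : Fin n) (r : ℕ), r < p i → fv (P i.val + r) = Tv (σ i) + r := by
    intro i r hr
    have hlt : P i.val + r < N := hbound i r hr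
    have hlt' : (∑ j ∈ Finset.Iio i, p j) + r < N := by rw [hIio]; exact hlt
    have h1 : fv (P i.val + r) = ((β ⟨P i.val + r, hlt⟩ : Fin N) : ℕ) := dif_pos hlt
    have h2 : (⟨P i.val + r, hlt⟩ : Fin N) = ⟨(∑ j ∈ Finset.Iio i, p j) + r, hlt'⟩ := by
      apply Fin.ext
      simp [hIio i]
    rw [h1, h2, hb i r hr hlt']
  have hTvs : ∀ k k' : Fin n, k < k' → Tv k + p (σ.symm k) ≤ Tv k' := by
    intro k k' hk
    have h1 : Tv k + p (σ.symm k) = ∑ j' ∈ insert k (Finset.Iio k), p (σ.symm j') := by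
      rw [Finset.sum_insert (by simp)]
      exact (Nat.add_comm _ _)
    rw [h1, Finset.Iio_insert]
    refine Finset.sum_le_sum_of_subset fun x hx => ?_
    simp only [Finset.mem_Iic] at hx
    simp only [Finset.mem_Iio]
    exact lt_of_le_of_lt hx hk
  have hGcore : ∀ (i j : Fin n) (r s : ℕ), r < p i → s < p j →
      G (P i.val + r) (P j.val + s) = c i.val j.val := by
    intro i j r s hr hs
    rw [hcval i j]
    simp only [hG]
    rw [hfv_eval i r hr, hfv_eval j s hs]
    rcases lt_trichotomy i j with hij | hij | hij
    · have h1 : P i.val + r < P j.val + s := by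
        have h0 : P i.val + r < P (i.val + 1) := by
          rw [hPstep]; exact Nat.add_lt_add_left (by rw [hqp]; exact hr) _
        have h2 : P (i.val + 1) ≤ P j.val := hPmono hij
        omega
      by_cases h2 : σ j < σ i
      · have h3 : Tv (σ j) + p (σ.symm (σ j)) ≤ Tv (σ i) := hTvs _ _ h2
        rw [Equiv.symm_apply_apply] at h3
        have h4 : Tv (σ j) + s ≤ Tv (σ i) + r := by
          have : s < p j := hs
          omega
        rw [if_pos ⟨h1, h4⟩, if_pos ⟨hij, h2⟩]
      · have hne : σ i ≠ σ j := fun h => (ne_of_lt hij) (σ.injective h)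
        have h2' : σ i < σ j := lt_of_le_of_ne (not_lt.1 h2) hne
        have h3 : Tv (σ i) + p (σ.symm (σ i)) ≤ Tv (σ j) := hTvs _ _ h2'
        rw [Equiv.symm_apply_apply] at h3
        have h4 : ¬ (Tv (σ j) + s ≤ Tv (σ i) + r) := by
          have : r < p i := hr
          omega
        rw [if_neg (fun h => h4 h.2), if_neg (fun h => h2 h.2)]
    · subst hij
      rw [if_neg, if_neg]
      · rintro ⟨h1, _⟩; exact absurd rfl (ne_of_lt h1)
      · rintro ⟨h1, h2⟩; omega
    · have h1 : ¬ (P i.val + r < P j.val + s) := by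
        have h0 : P j.val + s < P (j.val + 1) := by
          rw [hPstep]; exact Nat.add_lt_add_left (by rw [hqp]; exact hs) _
        have h2 : P (j.val + 1) ≤ P i.val := hPmono hij
        omega
      rw [if_neg (fun h => h1 h.1), if_neg (fun h => absurd hij (asymm h.1))]
  -- now the counting
  suffices hm : (∑ x ∈ Equiv.Perm.finPairsLT N, if β x.1 ≤ β x.2 then 1 else 0)
      = (∑ i : Fin n, ∑ j : Fin n, if i < j ∧ σ j < σ i then p i * p j else 0) by
    rw [sign_eq_signAux', signAux_eq_pow', hm]
  have hfp : Equiv.Perm.finPairsLT N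
      = Finset.univ.filter (fun x : (Σ _ : Fin N, Fin N) => x.2 < x.1) := by
    ext x; simp [Equiv.Perm.mem_finPairsLT]
  calc (∑ x ∈ Equiv.Perm.finPairsLT N, if β x.1 ≤ β x.2 then 1 else 0)
      = ∑ x : (Σ _ : Fin N, Fin N), if x.2 < x.1 ∧ β x.1 ≤ β x.2 then 1 else 0 := by
        rw [hfp, Finset.sum_filter]
        refine Finset.sum_congr rfl fun x _ => ?_
        by_cases h1 : x.2 < x.1 <;> by_cases h2 : β x.1 ≤ β x.2 <;> simp [h1, h2]
    _ = ∑ b : Fin N, ∑ a : Fin N, if a < b ∧ β b ≤ β a then 1 else 0 := by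
        rw [← Finset.univ_sigma_univ, Finset.sum_sigma]
    _ = ∑ b : Fin N, ∑ a : Fin N, G a.val b.val := by
        refine Finset.sum_congr rfl fun b _ => Finset.sum_congr rfl fun a _ => ?_
        simp only [hG]
        have h1 : fv (b : ℕ) = ((β b : Fin N) : ℕ) := by
          simp only [hfv]; rw [dif_pos b.isLt, Fin.eta]
        have h2 : fv (a : ℕ) = ((β a : Fin N) : ℕ) := by
          simp only [hfv]; rw [dif_pos a.isLt, Fin.eta]
        rw [h1, h2]
        simp only [Fin.lt_def, Fin.le_def]
    _ = ∑ y ∈ Finset.range N, ∑ x ∈ Finset.range N, G x y := by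
        rw [← Fin.sum_univ_eq_sum_range (fun y => ∑ x ∈ Finset.range N, G x y) N]
        exact Finset.sum_congr rfl fun b _ => Fin.sum_univ_eq_sum_range (fun x => G x b.val) N
    _ = ∑ j ∈ Finset.range n, ∑ s ∈ Finset.range (q j),
          ∑ x ∈ Finset.range N, G x (P j + s) :=
        sum_range_sum'' q (fun y => ∑ x ∈ Finset.range N, G x y) n N hNP
    _ = ∑ j ∈ Finset.range n, ∑ s ∈ Finset.range (q j),
          ∑ i ∈ Finset.range n, ∑ r ∈ Finset.range (q i), G (P i + r) (P j + s) := by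
        refine Finset.sum_congr rfl fun j _ => Finset.sum_congr rfl fun s _ => ?_
        exact sum_range_sum'' q (fun x => G x (P j + s)) n N hNP
    _ = ∑ j ∈ Finset.range n, ∑ i ∈ Finset.range n,
          ∑ s ∈ Finset.range (q j), ∑ r ∈ Finset.range (q i), G (P i + r) (P j + s) :=
        Finset.sum_congr rfl fun j _ => Finset.sum_comm
    _ = ∑ j ∈ Finset.range n, ∑ i ∈ Finset.range n, q j * (q i * c i j) := by
        refine Finset.sum_congr rfl fun j hj => Finset.sum_congr rfl fun i hi => ?_
        rw [Finset.mem_range] at hj hi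
        have hstep : (∑ s ∈ Finset.range (q j), ∑ r ∈ Finset.range (q i), G (P i + r) (P j + s))
            = ∑ s ∈ Finset.range (q j), ∑ r ∈ Finset.range (q i), c i j := by
          refine Finset.sum_congr rfl fun s hs => Finset.sum_congr rfl fun r hr => ?_
          rw [Finset.mem_range] at hr hs
          have hr' : r < p ⟨i, hi⟩ := by rw [← hqp ⟨i, hi⟩]; exact hr
          have hs' : s < p ⟨j, hj⟩ := by rw [← hqp ⟨j, hj⟩]; exact hs
          exact hGcore ⟨i, hi⟩ ⟨j, hj⟩ r s hr' hs'
        rw [hstep]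
        simp only [Finset.sum_const, Finset.card_range, smul_eq_mul, Nat.mul_assoc]
    _ = ∑ i ∈ Finset.range n, ∑ j ∈ Finset.range n, q j * (q i * c i j) := Finset.sum_comm
    _ = ∑ i : Fin n, ∑ j : Fin n, q j.val * (q i.val * c i.val j.val) := by
        rw [← Fin.sum_univ_eq_sum_range
          (fun iN => ∑ j ∈ Finset.range n, q j * (q iN * c iN j)) n]
        exact Finset.sum_congr rfl fun i _ =>
          (Fin.sum_univ_eq_sum_range (fun jN => q jN * (q i.val * c i.val jN)) n).symm
    _ = ∑ i : Fin n, ∑ j : Fin n, if i < j ∧ σ j < σ i then p i * p j else 0 := by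
        refine Finset.sum_congr rfl fun i _ => Finset.sum_congr rfl fun j _ => ?_
        rw [hcval i j, hqp i, hqp j]
        rcases Decidable.em (i < j ∧ σ j < σ i) with hcond | hcond
        · rw [if_pos hcond, if_pos hcond, Nat.mul_one, Nat.mul_comm]
        · rw [if_neg hcond, if_neg hcond, Nat.mul_zero, Nat.mul_zero]
end
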